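/- Unimodularity in dimension one: for every finite simple graph G, the determinant of the connection Laplacian L is 1 or −1. -/

import Mathlib

/-!
Order the simplices as vertices first, then edges. In block form `L = [[1, B], [Bᵀ, C]]`, where
`B` is the vertex–edge incidence matrix, so `det L = det (C - Bᵀ B)`. The entry `(Bᵀ B) e f` counts
the common vertices of `e` and `f`: two for `e = f`, and for `e ≠ f` at most one, hence exactly
`C e f`. So the Schur complement is `-1` and `det L = (-1) ^ #E`.
-/

open Matrix

variable {V : Type*} [Fintype V] [DecidableEq V]

/-- The simplices of the 1-dimensional simplicial complex of a graph: vertices and edges. -/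
abbrev Simplex (G : SimpleGraph V) [DecidableRel G.Adj] := V ⊕ G.edgeSet

variable (G : SimpleGraph V) [DecidableRel G.Adj]

/-- The vertex set of a simplex. -/
def sVerts : Simplex G → Set V
  | Sum.inl u => {u}
  | Sum.inr f => {w | w ∈ (f : Sym2 V)}

instance (x : Simplex G) (w : V) : Decidable (w ∈ sVerts G x) :=
  match x with
  | Sum.inl u => decidable_of_iff (w = u) (by simp [sVerts])
  | Sum.inr f => decidable_of_iff (w ∈ (f : Sym2 V)) (by simp [sVerts])

/-- Two simplices touch if their vertex sets intersect. -/
def touches (x y : Simplex G) : Prop := ∃ w, w ∈ sVerts G x ∧ w ∈ sVerts G y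

instance : DecidableRel (touches G) := fun _ _ => Fintype.decidableExistsFintype

/-- The connection Laplacian. -/
def connL : Matrix (Simplex G) (Simplex G) ℤ :=
  Matrix.of fun x y => if touches G x y then 1 else 0

open Finset

namespace Sym2

variable {α : Type*} [DecidableEq α]

theorem filter_mem_univ_eq_toFinset [Fintype α] (z : Sym2 α) :
    ({u | u ∈ z} : Finset α) = z.toFinset := by
  ext
  simp

theorem card_toFinset_inter_le_one {z z' : Sym2 α} (h : z ≠ z') :
    #(z.toFinset ∩ z'.toFinset) ≤ 1 := by
  refine card_le_one.2 fun x hx y hy => by_contra fun hxy => h ?_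
  simp only [mem_inter, mem_toFinset] at hx hy
  exact ((mem_and_mem_iff hxy).1 ⟨hx.1, hy.1⟩).trans ((mem_and_mem_iff hxy).1 ⟨hx.2, hy.2⟩).symm

end Sym2

lemma connL_toBlocks₁₁ : (connL G).toBlocks₁₁ = 1 := by
  ext u v
  simp [toBlocks₁₁, connL, touches, sVerts, one_apply]

lemma connL_toBlocks₂₁_mul_toBlocks₁₂_apply (e f : G.edgeSet) :
    ((connL G).toBlocks₂₁ * (connL G).toBlocks₁₂) e f =
      #((e : Sym2 V).toFinset ∩ (f : Sym2 V).toFinset) := by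
  simp [mul_apply, toBlocks₂₁, toBlocks₁₂, connL, touches, sVerts, ← ite_and, sum_boole,
    filter_and, Sym2.filter_mem_univ_eq_toFinset, inter_comm]

lemma connL_toBlocks₂₂_apply (e f : G.edgeSet) :
    (connL G).toBlocks₂₂ e f =
      if ((e : Sym2 V).toFinset ∩ (f : Sym2 V).toFinset).Nonempty then 1 else 0 := by
  simp [toBlocks₂₂, connL, touches, sVerts, Finset.Nonempty]

lemma connL_schur_complement :
    (connL G).toBlocks₂₂ - (connL G).toBlocks₂₁ * (connL G).toBlocks₁₂ = -1 := by
  ext e f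
  rw [Matrix.sub_apply, connL_toBlocks₂₂_apply, connL_toBlocks₂₁_mul_toBlocks₁₂_apply, neg_apply,
    one_apply]
  simp only [← card_pos]
  by_cases hef : e = f
  · subst hef
    simp [Sym2.card_toFinset_of_not_isDiag _ (G.not_isDiag_of_mem_edgeSet e.2)]
  · have hcard := Sym2.card_toFinset_inter_le_one (Subtype.coe_injective.ne hef)
    split_ifs <;> omega

theorem det_connL : (connL G).det = (-1) ^ Fintype.card G.edgeSet := by
  rw [← fromBlocks_toBlocks (connL G), connL_toBlocks₁₁, det_fromBlocks_one₁₁,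
    connL_schur_complement, det_neg, det_one, mul_one]

theorem connL_unimodular : (connL G).det = 1 ∨ (connL G).det = -1 := by
  rw [det_connL]
  exact neg_one_pow_eq_or ℤ _
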